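/- Let p(z) ∈ ℤ[z] be a polynomial of degree d ≥ 2 with positive leading coefficient. For all sufficiently large n, suppose both p(n) and p(p(n)/2) are even. Then the 2-coloring of the interval [n, (1/2)·p((1/2)·p(n)) − 1] that assigns +1 to all integers in [n, p(n)/2 − 1] and −1 to all integers in [p(n)/2, (1/2)·p((1/2)·p(n)) − 1] admits no monochromatic solution (x, y, z) of x + y = p(z) with x, y, z in the colored interval. -/

import Mathlib

/-!
Colour `[n, N - 1]` red and `[N, M - 1]` blue, where `N = p(n)/2` and `M = p(N)/2`. Once `p` is
increasing from `n` on and `p(n) ≥ 2n` (so `n ≤ N`), a red solution has `x + y ≤ 2N - 2 < p(n) ≤ p(z)`,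
and a blue one has `z ≥ N`, hence `x + y ≤ 2M - 2 < p(N) ≤ p(z)`. Both conditions hold for large `n`
because `p` has degree at least `2` and positive leading coefficient: `p'` is eventually
nonnegative, and `p(x) - 2x` tends to infinity.
-/

open Filter Polynomial Set

namespace Polynomial

section OrderedField

variable {𝕜 : Type*} [NormedField 𝕜] [LinearOrder 𝕜] [IsStrictOrderedRing 𝕜] [OrderTopology 𝕜]

theorem eventually_nonneg_eval_of_leadingCoeff_nonneg {p : 𝕜[X]} (hp : 0 ≤ p.leadingCoeff) :
    ∀ᶠ x in atTop, 0 ≤ p.eval x := by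
  rcases lt_or_ge 0 p.degree with hdeg | hdeg
  · exact (p.tendsto_atTop_of_leadingCoeff_nonneg hdeg hp).eventually_ge_atTop 0
  · rw [eq_C_of_degree_le_zero hdeg] at hp ⊢
    exact .of_forall fun _ => by simpa using hp

theorem eventually_const_mul_le_eval {p : 𝕜[X]} (hdeg : 1 < p.natDegree)
    (hp : 0 ≤ p.leadingCoeff) (c : 𝕜) : ∀ᶠ x in atTop, c * x ≤ p.eval x := by
  have hdeg' : 1 < p.degree := by exact_mod_cast coe_lt_degree.2 hdeg
  have hlt : (C c * X).degree < p.degree := degree_C_mul_X_le c |>.trans_lt hdeg'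
  have hsub := (p - C c * X).tendsto_atTop_of_leadingCoeff_nonneg
    (by rw [degree_sub_eq_left_of_degree_lt hlt]; exact zero_lt_one.trans hdeg')
    (by rwa [leadingCoeff_sub_of_degree_lt hlt])
  filter_upwards [hsub.eventually_ge_atTop 0] with x hx
  simpa using hx

end OrderedField

theorem exists_monotoneOn_Ici_eval {p : ℝ[X]} (hp : 0 ≤ p.leadingCoeff) :
    ∃ R, MonotoneOn (fun x => p.eval x) (Ici R) := by
  obtain ⟨R, hR⟩ := eventually_atTop.1 <| eventually_nonneg_eval_of_leadingCoeff_nonneg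
    (p := derivative p) (by rw [leadingCoeff_derivative]; positivity)
  refine ⟨R, monotoneOn_of_deriv_nonneg (convex_Ici R) p.continuousOn
    p.differentiable.differentiableOn fun x hx => ?_⟩
  rw [interior_Ici] at hx
  rw [Polynomial.deriv]
  exact hR x hx.le

theorem exists_monotoneOn_Ici_eval_int {p : ℤ[X]} (hp : 0 ≤ p.leadingCoeff) :
    ∃ n₀ : ℤ, MonotoneOn (fun n => p.eval n) (Ici n₀) := by
  have hinj : Function.Injective (Int.castRingHom ℝ) := Int.cast_injective
  obtain ⟨R, hR⟩ := exists_monotoneOn_Ici_eval (p := p.map (Int.castRingHom ℝ))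
    (by rw [leadingCoeff_map_of_injective hinj, eq_intCast]; exact_mod_cast hp)
  refine ⟨⌈R⌉, fun m hm m' hm' hle => ?_⟩
  have := hR (Int.ceil_le.1 hm) (Int.ceil_le.1 hm') (Int.cast_le.2 hle)
  simpa only [eval_intCast_map, eq_intCast, Int.cast_id, Int.cast_le] using this

theorem eventually_const_mul_le_eval_int {p : ℤ[X]} (hdeg : 1 < p.natDegree)
    (hp : 0 ≤ p.leadingCoeff) (c : ℤ) : ∀ᶠ n in atTop, c * n ≤ p.eval n := by
  have hinj : Function.Injective (Int.castRingHom ℝ) := Int.cast_injective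
  have hreal := eventually_const_mul_le_eval (p := p.map (Int.castRingHom ℝ))
    (by rwa [natDegree_map_eq_of_injective hinj])
    (by rw [leadingCoeff_map_of_injective hinj, eq_intCast]; exact_mod_cast hp) c
  filter_upwards [tendsto_intCast_atTop_atTop.eventually hreal] with n hn
  simpa only [eval_intCast_map, eq_intCast, Int.cast_id, ← Int.cast_mul, Int.cast_le] using hn

section Semiring

variable {R : Type*} [Semiring R]

theorem coeff_sum_range_C_mul_X_pow (c : ℕ → R) (d n : ℕ) :
    (∑ i ∈ Finset.range (d + 1), C (c i) * X ^ i).coeff n = if n ≤ d then c n else 0 := by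
  simp [finsetSum_coeff]

theorem natDegree_sum_range_C_mul_X_pow {c : ℕ → R} {d : ℕ} (hc : c d ≠ 0) :
    (∑ i ∈ Finset.range (d + 1), C (c i) * X ^ i).natDegree = d := by
  refine natDegree_eq_of_le_of_coeff_ne_zero (natDegree_le_iff_coeff_eq_zero.2 fun n hn => ?_) ?_
  · rw [coeff_sum_range_C_mul_X_pow, if_neg (by exact_mod_cast hn.not_ge)]
  · rwa [coeff_sum_range_C_mul_X_pow, if_pos le_rfl]

theorem leadingCoeff_sum_range_C_mul_X_pow {c : ℕ → R} {d : ℕ} (hc : c d ≠ 0) :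
    (∑ i ∈ Finset.range (d + 1), C (c i) * X ^ i).leadingCoeff = c d := by
  rw [leadingCoeff, natDegree_sum_range_C_mul_X_pow hc, coeff_sum_range_C_mul_X_pow, if_pos le_rfl]

end Semiring

end Polynomial

theorem no_monochromatic_solution_of_monotoneOn {P : ℤ → ℤ} {n : ℤ} (hmono : MonotoneOn P (Ici n))
    (hgrow : 2 * n ≤ P n) (φ : ℤ → ℤ) (hred : ∀ x ∈ Icc n (P n / 2 - 1), φ x = 1)
    (hblue : ∀ x ∈ Icc (P n / 2) (P (P n / 2) / 2 - 1), φ x = -1) :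
    ¬ ∃ x y z : ℤ,
      x ∈ Icc n (P (P n / 2) / 2 - 1) ∧ y ∈ Icc n (P (P n / 2) / 2 - 1) ∧
      z ∈ Icc n (P (P n / 2) / 2 - 1) ∧ x + y = P z ∧ φ x = φ y ∧ φ y = φ z := by
  rintro ⟨x, y, z, hx, hy, hz, hsum, hxy, hyz⟩
  simp only [mem_Icc] at hx hy hz
  have hn : n ≤ P n / 2 := by omega
  have red_lt : ∀ w ∈ Icc n (P (P n / 2) / 2 - 1), φ w = 1 → w < P n / 2 := fun w hw hw1 => by
    by_contra! hw'
    have := hblue w ⟨hw', hw.2⟩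
    omega
  rcases lt_or_ge z (P n / 2) with hz_red | hz_blue
  · have hφz := hred z ⟨hz.1, by omega⟩
    have hx_red := red_lt x hx (by rw [hxy, hyz, hφz])
    have hy_red := red_lt y hy (by rw [hyz, hφz])
    have := hmono (mem_Ici.2 le_rfl) hz.1 hz.1
    omega
  · have := hmono (mem_Ici.2 hn) (hn.trans hz_blue) hz_blue
    omega

theorem lower_bound_coloring_no_solution (d : ℕ) (hd : 2 ≤ d) (a : ℕ → ℤ) (ha : 0 < a d)
    (P : ℤ → ℤ) (hP : ∀ z, P z = ∑ i ∈ Finset.range (d + 1), a i * z ^ i) :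
    ∃ n₀ : ℤ, ∀ n : ℤ, n₀ ≤ n → Even (P n) → Even (P (P n / 2)) →
      ∀ φ : ℤ → ℤ,
        (∀ x ∈ Set.Icc n (P n / 2 - 1), φ x = 1) →
        (∀ x ∈ Set.Icc (P n / 2) (P (P n / 2) / 2 - 1), φ x = -1) →
        ¬ ∃ x y z : ℤ,
            x ∈ Set.Icc n (P (P n / 2) / 2 - 1) ∧
            y ∈ Set.Icc n (P (P n / 2) / 2 - 1) ∧
            z ∈ Set.Icc n (P (P n / 2) / 2 - 1) ∧
            x + y = P z ∧ φ x = φ y ∧ φ y = φ z := by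
  set p : ℤ[X] := ∑ i ∈ Finset.range (d + 1), C (a i) * X ^ i
  obtain rfl : P = fun z => p.eval z := funext fun z => by simp [p, hP, eval_finsetSum]
  have hlead : 0 ≤ p.leadingCoeff := (leadingCoeff_sum_range_C_mul_X_pow ha.ne').symm ▸ ha.le
  have hdeg : 1 < p.natDegree := (natDegree_sum_range_C_mul_X_pow ha.ne').symm ▸ hd
  obtain ⟨n₁, hmono⟩ := exists_monotoneOn_Ici_eval_int hlead
  obtain ⟨n₂, hgrow⟩ := eventually_atTop.1 (eventually_const_mul_le_eval_int hdeg hlead 2)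
  exact ⟨max n₁ n₂, fun n hn _ _ φ hred hblue => no_monochromatic_solution_of_monotoneOn
    (hmono.mono (Ici_subset_Ici.2 (le_of_max_le_left hn))) (hgrow n (le_of_max_le_right hn))
    φ hred hblue⟩
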